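/- arXiv:1506.07389 — 6 statements merged into one kernel-verified Lean document; each statement's English description precedes it below -/
import Mathlib

section
/- Let G be a compact abelian group with dual group Γ and let E ⊆ Γ. Then κ(E) = |1 − e^{iα(E)}|, where κ(E) is the Kronecker constant of E and α(E) is the angular Kronecker constant of E. -/
open Complex
open scoped Real

/-- Distance between two real numbers measured modulo `2π`, i.e. as distance
on the circle `ℝ/2πℤ`; it takes values in `[0, π]`. -/
noncomputable def angDist (a b : ℝ) : ℝ := |((a - b : ℝ) : Real.Angle).toReal|

/-- The Kronecker constant `κ(E)` of a set of characters. -/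
noncomputable def kroneckerConstant {G : Type*} [CommGroup G] [TopologicalSpace G]
    (E : Set (ContinuousMonoidHom G Circle)) : ℝ :=
  sInf {ε : ℝ | 0 ≤ ε ∧ ∀ φ : ContinuousMonoidHom G Circle → Circle,
    ∃ x : G, ∀ γ ∈ E, ‖(φ γ : ℂ) - (γ x : ℂ)‖ < ε}

/-- The angular Kronecker constant `α(E)`: the infimum of `ε ≥ 0` such that every
`[0, 2π)`-valued function on `E` can be approximated within `ε` (mod `2π`) by the
argument of a character evaluation. -/
noncomputable def angularKroneckerConstant {G : Type*} [CommGroup G] [TopologicalSpace G]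
    (E : Set (ContinuousMonoidHom G Circle)) : ℝ :=
  sInf {ε : ℝ | 0 ≤ ε ∧ ∀ φ : ContinuousMonoidHom G Circle → ℝ,
    (∀ γ ∈ E, φ γ ∈ Set.Ico 0 (2 * π)) →
      ∃ x : G, ∀ γ ∈ E, angDist (φ γ) (Complex.arg (γ x : ℂ)) ≤ ε}

/-!
The chord between the points of angles `a` and `b` on the unit circle has length
`2 sin (d / 2)`, where `d ∈ [0, π]` is the angular distance of `a` and `b`, and
`t ↦ 2 sin (t / 2)` is an increasing bijection of `[0, π]` onto `[0, 2]`. Hence an angular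
approximation within `d` is a chordal approximation within anything larger than `2 sin (d / 2)`,
and a chordal approximation within `ε ≤ 2` is an angular one within `2 arcsin (ε / 2)`.
Passing to infima, using that `sin` is `1`-Lipschitz, gives `κ(E) = 2 sin (α(E) / 2)`.
-/

lemma angDist_nonneg (a b : ℝ) : 0 ≤ angDist a b := abs_nonneg _

lemma angDist_le_pi (a b : ℝ) : angDist a b ≤ π := Real.Angle.abs_toReal_le_pi _

lemma cos_angDist (a b : ℝ) : Real.cos (angDist a b) = Real.cos (a - b) := by
  rw [angDist, Real.cos_abs, Real.Angle.cos_toReal, Real.Angle.cos_coe]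

lemma norm_exp_mul_I_sub_one (t : ℝ) : ‖exp (t * I) - 1‖ = 2 * |Real.sin (t / 2)| := by
  rw [mul_comm, norm_exp_I_mul_ofReal_sub_one, Real.norm_eq_abs, abs_mul, abs_two]

lemma norm_one_sub_exp_mul_I {t : ℝ} (h0 : 0 ≤ t) (hπ : t ≤ π) :
    ‖1 - exp (t * I)‖ = 2 * Real.sin (t / 2) := by
  rw [norm_sub_rev, norm_exp_mul_I_sub_one,
    abs_of_nonneg (Real.sin_nonneg_of_nonneg_of_le_pi (by linarith) (by linarith))]

lemma norm_circleExp_sub_circleExp (a b : ℝ) :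
    ‖(Circle.exp a : ℂ) - Circle.exp b‖ = 2 * Real.sin (angDist a b / 2) := by
  have hfactor :
      (Circle.exp a : ℂ) - Circle.exp b = (exp ((a - b : ℝ) * I) - 1) * Circle.exp b := by
    rw [Circle.coe_exp, Circle.coe_exp, sub_mul, one_mul, ← exp_add]
    push_cast
    ring_nf
  rw [hfactor, norm_mul, Circle.norm_coe, mul_one, norm_exp_mul_I_sub_one, Real.abs_sin_half,
    ← cos_angDist, ← Real.abs_sin_half, abs_of_nonneg]
  exact Real.sin_nonneg_of_nonneg_of_le_pi (by linarith [angDist_nonneg a b])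
    (by linarith [angDist_le_pi a b, Real.pi_pos])

lemma strictMonoOn_two_mul_sin_half :
    StrictMonoOn (fun t => 2 * Real.sin (t / 2)) (Set.Icc 0 π) := by
  intro s ⟨hs0, hsπ⟩ t ⟨ht0, htπ⟩ hst
  have := Real.strictMonoOn_sin ⟨by linarith [Real.pi_pos], by linarith⟩
    ⟨by linarith [Real.pi_pos], by linarith⟩ (by linarith : s / 2 < t / 2)
  dsimp only
  linarith

lemma two_mul_sin_half_le_of_le {s t : ℝ} (hs : 0 ≤ s) (ht : t ≤ π) (hst : s ≤ t) :
    2 * Real.sin (s / 2) ≤ 2 * Real.sin (t / 2) :=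
  strictMonoOn_two_mul_sin_half.monotoneOn ⟨hs, hst.trans ht⟩ ⟨hs.trans hst, ht⟩ hst

lemma two_mul_sin_arcsin_half {ε : ℝ} (h0 : 0 ≤ ε) (h2 : ε ≤ 2) :
    2 * Real.sin (2 * Real.arcsin (ε / 2) / 2) = ε := by
  rw [mul_div_cancel_left₀ _ two_ne_zero, Real.sin_arcsin (by linarith) (by linarith)]
  ring

lemma circleExp_toIcoMod_arg (z : Circle) :
    Circle.exp (toIcoMod Real.two_pi_pos 0 (arg z)) = z := by
  rw [toIcoMod, Circle.periodic_exp.sub_zsmul_eq, Circle.exp_arg]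

section Kronecker

variable {G : Type*} [CommGroup G] [TopologicalSpace G] (E : Set (ContinuousMonoidHom G Circle))

def IsKroneckerBound (ε : ℝ) : Prop :=
  ∀ φ : ContinuousMonoidHom G Circle → Circle, ∃ x : G, ∀ γ ∈ E, ‖(φ γ : ℂ) - (γ x : ℂ)‖ < ε

def IsAngularKroneckerBound (ε : ℝ) : Prop :=
  ∀ φ : ContinuousMonoidHom G Circle → ℝ, (∀ γ ∈ E, φ γ ∈ Set.Ico 0 (2 * π)) →
    ∃ x : G, ∀ γ ∈ E, angDist (φ γ) (Complex.arg (γ x : ℂ)) ≤ ε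

lemma kroneckerConstant_eq_sInf :
    kroneckerConstant E = sInf {ε | 0 ≤ ε ∧ IsKroneckerBound E ε} := rfl

lemma angularKroneckerConstant_eq_sInf :
    angularKroneckerConstant E = sInf {ε | 0 ≤ ε ∧ IsAngularKroneckerBound E ε} := rfl

variable {E}

lemma isAngularKroneckerBound_pi : IsAngularKroneckerBound E π :=
  fun _ _ => ⟨1, fun _ _ => angDist_le_pi _ _⟩

lemma IsAngularKroneckerBound.min_pi {d : ℝ} (h : IsAngularKroneckerBound E d) :
    IsAngularKroneckerBound E (min d π) := fun φ hφ =>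
  (h φ hφ).imp fun _ hx γ hγ => le_min (hx γ hγ) (angDist_le_pi _ _)

lemma IsAngularKroneckerBound.isKroneckerBound {d ε : ℝ} (h : IsAngularKroneckerBound E d)
    (hd : d ≤ π) (hε : 2 * Real.sin (d / 2) < ε) : IsKroneckerBound E ε := by
  intro ψ
  obtain ⟨x, hx⟩ := h (fun γ => toIcoMod Real.two_pi_pos 0 (arg (ψ γ)))
    (fun γ _ => toIcoMod_mem_Ico' _ _)
  refine ⟨x, fun γ hγ => ?_⟩
  rw [← circleExp_toIcoMod_arg (ψ γ), ← Circle.exp_arg (γ x), norm_circleExp_sub_circleExp]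
  exact (two_mul_sin_half_le_of_le (angDist_nonneg _ _) hd (hx γ hγ)).trans_lt hε

lemma IsKroneckerBound.isAngularKroneckerBound {ε : ℝ} (h : IsKroneckerBound E ε)
    (h0 : 0 ≤ ε) (h2 : ε ≤ 2) : IsAngularKroneckerBound E (2 * Real.arcsin (ε / 2)) := by
  have harcsin := Real.arcsin_mem_Icc (ε / 2)
  have harcsin0 : 0 ≤ Real.arcsin (ε / 2) := Real.arcsin_nonneg.mpr (by linarith)
  intro φ _
  obtain ⟨x, hx⟩ := h (fun γ => Circle.exp (φ γ))
  refine ⟨x, fun γ hγ => ?_⟩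
  have hchord := hx γ hγ
  rw [← Circle.exp_arg (γ x), norm_circleExp_sub_circleExp,
    ← two_mul_sin_arcsin_half h0 h2] at hchord
  exact (strictMonoOn_two_mul_sin_half.lt_iff_lt ⟨angDist_nonneg _ _, angDist_le_pi _ _⟩
    ⟨by linarith, by linarith [harcsin.2]⟩).mp hchord |>.le

lemma angularKroneckerConstant_mem_Icc : angularKroneckerConstant E ∈ Set.Icc 0 π := by
  have hπ : π ∈ {ε | 0 ≤ ε ∧ IsAngularKroneckerBound E ε} :=
    ⟨Real.pi_pos.le, isAngularKroneckerBound_pi⟩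
  exact ⟨le_csInf ⟨π, hπ⟩ fun _ hε => hε.1, csInf_le ⟨0, fun _ hε => hε.1⟩ hπ⟩

lemma kroneckerConstant_le :
    kroneckerConstant E ≤ 2 * Real.sin (angularKroneckerConstant E / 2) := by
  set α := angularKroneckerConstant E
  obtain ⟨hα0, hαπ⟩ : α ∈ Set.Icc 0 π := angularKroneckerConstant_mem_Icc
  rw [kroneckerConstant_eq_sInf]
  refine le_of_forall_gt_imp_ge_of_dense fun c hc => csInf_le ⟨0, fun _ hε => hε.1⟩ ?_
  obtain ⟨d, ⟨hd0, hd⟩, hdα⟩ : ∃ d ∈ {ε | 0 ≤ ε ∧ IsAngularKroneckerBound E ε},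
      d < α + (c - 2 * Real.sin (α / 2)) :=
    exists_lt_of_csInf_lt ⟨π, Real.pi_pos.le, isAngularKroneckerBound_pi⟩
      ((angularKroneckerConstant_eq_sInf E).symm.trans_lt (by linarith))
  have hαd : α ≤ min d π :=
    le_min (csInf_le ⟨0, fun _ hε => hε.1⟩ ⟨hd0, hd⟩) hαπ
  have hsin := abs_le.mp (Real.abs_sin_sub_sin_le (min d π / 2) (α / 2))
  rw [abs_of_nonneg (by linarith)] at hsin
  have hsinα := Real.sin_nonneg_of_nonneg_of_le_pi (x := α / 2) (by linarith) (by linarith)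
  refine ⟨by linarith, hd.min_pi.isKroneckerBound (min_le_right _ _) ?_⟩
  linarith [min_le_left d π]

lemma le_kroneckerConstant :
    2 * Real.sin (angularKroneckerConstant E / 2) ≤ kroneckerConstant E := by
  set α := angularKroneckerConstant E
  obtain ⟨hα0, hαπ⟩ : α ∈ Set.Icc 0 π := angularKroneckerConstant_mem_Icc
  have hthree : IsKroneckerBound E 3 := isAngularKroneckerBound_pi.isKroneckerBound le_rfl
    (by rw [Real.sin_pi_div_two]; norm_num)
  rw [kroneckerConstant_eq_sInf]
  refine le_csInf ⟨3, by norm_num, hthree⟩ fun ε ⟨hε0, hε⟩ => ?_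
  rcases le_or_gt 2 ε with h2 | h2
  · linarith [Real.sin_le_one (α / 2)]
  · have hd := hε.isAngularKroneckerBound hε0 h2.le
    have hαd : α ≤ 2 * Real.arcsin (ε / 2) := csInf_le ⟨0, fun _ hε => hε.1⟩
      ⟨by linarith [Real.arcsin_nonneg.mpr (by linarith : 0 ≤ ε / 2)], hd⟩
    calc 2 * Real.sin (α / 2) ≤ 2 * Real.sin (2 * Real.arcsin (ε / 2) / 2) :=
          two_mul_sin_half_le_of_le hα0 (by linarith [Real.arcsin_le_pi_div_two (ε / 2)]) hαd
      _ = ε := two_mul_sin_arcsin_half hε0 h2.le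

end Kronecker

theorem stmt2_general {G : Type*} [CommGroup G] [TopologicalSpace G]
    (E : Set (ContinuousMonoidHom G Circle)) :
    kroneckerConstant E
      = ‖1 - Complex.exp ((angularKroneckerConstant E : ℂ) * Complex.I)‖ := by
  obtain ⟨hα0, hαπ⟩ := angularKroneckerConstant_mem_Icc (E := E)
  rw [norm_one_sub_exp_mul_I hα0 hαπ]
  exact le_antisymm kroneckerConstant_le le_kroneckerConstant

theorem stmt2 {G : Type*} [CommGroup G] [TopologicalSpace G] [IsTopologicalGroup G]
    [CompactSpace G] (E : Set (ContinuousMonoidHom G Circle)) :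
    kroneckerConstant E
      = ‖1 - Complex.exp ((angularKroneckerConstant E : ℂ) * Complex.I)‖ :=
  stmt2_general E
end

section
/- Let Γ = ℤ₂ ⊕ ℤ₂ ⊕ ℤ₂ with standard basis vectors e₁, e₂, e₃, regarded as the dual group of the compact group G = ℤ₂ ⊕ ℤ₂ ⊕ ℤ₂ via the pairing γ(g) = (−1)^{γ₁g₁ + γ₂g₂ + γ₃g₃}. Then the set E = {e₂, e₃, e₁+e₂, e₁+e₃} has Kronecker constant κ(E) = 2. -/
/-! Every value `φ γ` and `γ x` lies on the unit circle, so any `x` is within `2` of `φ` on `E`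
and `κ(E) ≤ 2`. Conversely, the characters are multiplicative in `γ` and
`e₂ + e₃ + (e₁ + e₂) + (e₁ + e₃) = 0`, so the four characters of `E` have product `1` at every
`x`. The sign pattern `φ = (1, 1, 1, -1)` has product `-1`, so every `x` gets the sign of some
`γ ∈ E` wrong, and there `|φ γ - γ(x)| = 2`. -/

open Complex
open scoped Real

/-- The pairing of `Γ = ℤ₂ ⊕ ℤ₂ ⊕ ℤ₂` with `G = ℤ₂ ⊕ ℤ₂ ⊕ ℤ₂`:
`γ(g) = (−1)^(γ₁g₁ + γ₂g₂ + γ₃g₃)`. -/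
def chi (γ g : ZMod 2 × ZMod 2 × ZMod 2) : ℂ :=
  (-1 : ℂ) ^ ((γ.1 * g.1 + γ.2.1 * g.2.1 + γ.2.2 * g.2.2).val)

/-- The Kronecker constant of `E ⊆ ℤ₂ ⊕ ℤ₂ ⊕ ℤ₂` (viewed as the dual of
`G = ℤ₂ ⊕ ℤ₂ ⊕ ℤ₂` via the pairing `chi`). -/
noncomputable def kappaZ2 (E : Set (ZMod 2 × ZMod 2 × ZMod 2)) : ℝ :=
  sInf {ε : ℝ | 0 ≤ ε ∧ ∀ φ : (ZMod 2 × ZMod 2 × ZMod 2) → ℂ,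
    (∀ γ ∈ E, ‖φ γ‖ = 1) →
      ∃ x : ZMod 2 × ZMod 2 × ZMod 2, ∀ γ ∈ E, ‖φ γ - chi γ x‖ < ε}

lemma neg_one_pow_zmod_two_val_add {R : Type*} [Ring R] (a b : ZMod 2) :
    (-1 : R) ^ (a + b).val = (-1) ^ a.val * (-1) ^ b.val := by
  rw [ZMod.val_add, ← neg_one_pow_eq_pow_mod_two, pow_add]

lemma norm_sub_eq_two_of_ne {a b : ℂ} (ha : a = 1 ∨ a = -1) (hb : b = 1 ∨ b = -1) (hab : a ≠ b) :
    ‖a - b‖ = 2 := by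
  rcases ha with rfl | rfl <;> rcases hb with rfl | rfl <;> first | exact absurd rfl hab | norm_num

section chi

variable (γ δ x : ZMod 2 × ZMod 2 × ZMod 2)

lemma chi_eq_one_or_eq_neg_one : chi γ x = 1 ∨ chi γ x = -1 :=
  neg_one_pow_eq_or ℂ _

lemma norm_chi : ‖chi γ x‖ = 1 := by
  rcases chi_eq_one_or_eq_neg_one γ x with h | h <;> simp [h]

lemma chi_zero_left : chi 0 x = 1 := by
  simp [chi]

lemma chi_add_left : chi (γ + δ) x = chi γ x * chi δ x := by
  simp only [chi, Prod.fst_add, Prod.snd_add, ← neg_one_pow_zmod_two_val_add]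
  congr 2
  ring

end chi

section kappaZ2

variable {E : Set (ZMod 2 × ZMod 2 × ZMod 2)}

def kroneckerAdmissible (E : Set (ZMod 2 × ZMod 2 × ZMod 2)) : Set ℝ :=
  {ε : ℝ | 0 ≤ ε ∧ ∀ φ : (ZMod 2 × ZMod 2 × ZMod 2) → ℂ,
    (∀ γ ∈ E, ‖φ γ‖ = 1) →
      ∃ x : ZMod 2 × ZMod 2 × ZMod 2, ∀ γ ∈ E, ‖φ γ - chi γ x‖ < ε}

lemma kappaZ2_eq_sInf_kroneckerAdmissible : kappaZ2 E = sInf (kroneckerAdmissible E) := rfl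

lemma mem_kroneckerAdmissible_of_two_lt {ε : ℝ} (hε : 2 < ε) : ε ∈ kroneckerAdmissible E := by
  refine ⟨by linarith, fun φ hφ => ⟨0, fun γ hγ => ?_⟩⟩
  calc ‖φ γ - chi γ 0‖ ≤ ‖φ γ‖ + ‖chi γ 0‖ := norm_sub_le _ _
    _ = 2 := by rw [hφ γ hγ, norm_chi]; norm_num
    _ < ε := hε

lemma two_lt_of_mem_kroneckerAdmissible {φ : (ZMod 2 × ZMod 2 × ZMod 2) → ℂ}
    (hφ : ∀ γ ∈ E, φ γ = 1 ∨ φ γ = -1) (hmiss : ∀ x, ∃ γ ∈ E, φ γ ≠ chi γ x) {ε : ℝ}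
    (hε : ε ∈ kroneckerAdmissible E) : 2 < ε := by
  obtain ⟨x, hx⟩ := hε.2 φ fun γ hγ => by rcases hφ γ hγ with h | h <;> simp [h]
  obtain ⟨γ, hγ, hne⟩ := hmiss x
  calc (2 : ℝ) = ‖φ γ - chi γ x‖ :=
        (norm_sub_eq_two_of_ne (hφ γ hγ) (chi_eq_one_or_eq_neg_one γ x) hne).symm
    _ < ε := hx γ hγ

lemma kappaZ2_eq_two_of_forall_exists_ne {φ : (ZMod 2 × ZMod 2 × ZMod 2) → ℂ}
    (hφ : ∀ γ ∈ E, φ γ = 1 ∨ φ γ = -1) (hmiss : ∀ x, ∃ γ ∈ E, φ γ ≠ chi γ x) :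
    kappaZ2 E = 2 := by
  have : kroneckerAdmissible E = Set.Ioi 2 :=
    Set.Subset.antisymm (fun _ hε => two_lt_of_mem_kroneckerAdmissible hφ hmiss hε)
      fun _ hε => mem_kroneckerAdmissible_of_two_lt hε
  rw [kappaZ2_eq_sInf_kroneckerAdmissible, this, csInf_Ioi]

end kappaZ2

lemma chi_mul_chi_mul_chi_mul_chi (x : ZMod 2 × ZMod 2 × ZMod 2) :
    chi (0, 1, 0) x * chi (0, 0, 1) x * chi (1, 1, 0) x * chi (1, 0, 1) x = 1 := by
  have hsum : ((0, 1, 0) + (0, 0, 1) + (1, 1, 0) + (1, 0, 1) : ZMod 2 × ZMod 2 × ZMod 2) = 0 := by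
    decide
  rw [← chi_add_left, ← chi_add_left, ← chi_add_left, hsum, chi_zero_left]

theorem stmt9 :
    kappaZ2 {(0, 1, 0), (0, 0, 1), (1, 1, 0), (1, 0, 1)} = 2 := by
  let φ : (ZMod 2 × ZMod 2 × ZMod 2) → ℂ := fun γ => if γ = (1, 0, 1) then -1 else 1
  refine kappaZ2_eq_two_of_forall_exists_ne (φ := φ) (fun γ _ => ?_) fun x => ?_
  · by_cases h : γ = (1, 0, 1) <;> simp [φ, h]
  · by_contra! hagree
    have hprod := chi_mul_chi_mul_chi_mul_chi x
    simp only [Set.mem_insert_iff, Set.mem_singleton_iff, forall_eq_or_imp, forall_eq] at hagree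
    rw [← hagree.1, ← hagree.2.1, ← hagree.2.2.1, ← hagree.2.2.2] at hprod
    norm_num [φ] at hprod
end

section
/- Let G = 𝕋 × G₂, where G₂ = ∏_{k=1}^∞ {−1, +1} is the countable direct product of copies of the multiplicative two-element group, a compact abelian group. Its dual group is Γ = ℤ ⊕ Γ₂, where Γ₂ = ⊕_{k=1}^∞ ℤ₂, via the pairing (m, γ)(u, (g_k)) = u^m · ∏_k g_k^{γ_k}. Let e_k denote the character u ↦ u^k of 𝕋 and γ_k the projection onto the k-th ℤ₂ factor. Then the set E = {(e_k, γ_k) : k ≥ 1} ∪ {(e_k^{−1}, γ_k) : k ≥ 1} ⊆ Γ is a Sidon set. -/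
open MeasureTheory Complex

noncomputable instance : MeasurableSpace Circle := borel Circle
instance : MeasurableSpace (Units ℤ) := ⊤

/-- The integral of a function against a finite complex Borel measure,
via the Jordan decompositions of its real and imaginary parts. -/
noncomputable def cmIntegral {G : Type*} [MeasurableSpace G]
    (μ : MeasureTheory.ComplexMeasure G) (f : G → ℂ) : ℂ :=
  ((∫ x, f x ∂ μ.re.toJordanDecomposition.posPart)
      - (∫ x, f x ∂ μ.re.toJordanDecomposition.negPart))
    + Complex.I * ((∫ x, f x ∂ μ.im.toJordanDecomposition.posPart)
      - (∫ x, f x ∂ μ.im.toJordanDecomposition.negPart))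

/-- The compact abelian group `G = 𝕋 × ∏_{k=1}^∞ {−1, +1}`. -/
abbrev Gprod : Type := Circle × (ℕ → Units ℤ)

/-- The action of `(m, γ) ∈ ℤ ⊕ (⊕ₖ ℤ₂)` on `(u, (gₖ)) ∈ 𝕋 × ∏ₖ {−1, +1}`:
`(u, (gₖ)) ↦ u^m ∏ₖ gₖ^{γₖ}`. -/
noncomputable def chr (γ : ℤ × (ℕ →₀ ZMod 2)) (x : Gprod) : ℂ :=
  ((x.1 ^ γ.1 : Circle) : ℂ) * ∏ k ∈ γ.2.support, (((x.2 k : ℤ) : ℂ)) ^ ((γ.2 k).val)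

/-- The set `E = {(eₖ, γₖ) : k ≥ 1} ∪ {(eₖ⁻¹, γₖ) : k ≥ 1}`, i.e.
`{(k, bₖ) : k ≥ 1} ∪ {(−k, bₖ) : k ≥ 1} ⊆ ℤ ⊕ (⊕ₖ ℤ₂)`. -/
def Eset : Set (ℤ × (ℕ →₀ ZMod 2)) :=
  {γ | ∃ k : ℕ, 1 ≤ k ∧
    (γ = (((k : ℤ), Finsupp.single k (1 : ZMod 2)) : ℤ × (ℕ →₀ ZMod 2)) ∨
     γ = ((-(k : ℤ), Finsupp.single k (1 : ZMod 2)) : ℤ × (ℕ →₀ ZMod 2)))}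

/-!
Given `a_k` with `‖a_k‖ ≤ 1`, draw `u` uniformly on the circle and, independently, `t`
uniformly in `(0, 1]`, and put `g_k = 1` iff `t ≤ (1 + Re (a_k u^k)) / 2`. Then
`E[g_k | u] = Re (a_k u^k) = (a_k u^k + conj a_k u^{-k}) / 2`, so the law of `(u, (g_k))` is a
probability measure on `G` whose Fourier coefficients at `(k, b_k)` and `(-k, b_k)` are `a_k / 2`
and `conj a_k / 2`, for all `k` at once. A complex combination `c (ν_A + i ν_B)` of two such
measures then takes any bounded prescribed values at `(k, b_k)` and `(-k, b_k)`.
-/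

open Set
open scoped Real ComplexConjugate

instance : BorelSpace Circle := ⟨rfl⟩

lemma chr_single_inv (n : ℤ) (k : ℕ) (x : Gprod) :
    chr (n, Finsupp.single k 1) x⁻¹ = ((x.1 ^ (-n) : Circle) : ℂ) * ((x.2 k : ℤ) : ℂ) := by
  simp [chr, ZMod.val_one, Int.units_inv_eq_self, inv_zpow']

lemma integral_Ioc_ite_le (p : ℝ) (hp : p ∈ Icc (0 : ℝ) 1) :
    ∫ t in Ioc (0 : ℝ) 1, (if t ≤ p then (1 : ℂ) else -1) = 2 * p - 1 := by
  have hind : (fun t : ℝ => if t ≤ p then (1 : ℂ) else -1)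
      = fun t => (Iic p).indicator 2 t - 1 := by
    ext t; by_cases h : t ≤ p <;> norm_num [h]
  rw [hind, integral_sub ((integrable_const 2).indicator measurableSet_Iic) (integrable_const 1),
    integral_indicator measurableSet_Iic, Measure.restrict_restrict measurableSet_Iic,
    Iic_inter_Ioc_of_le hp.2]
  simp only [Pi.ofNat_apply, integral_const, MeasurableSet.univ, measureReal_restrict_apply,
    univ_inter, Real.volume_real_Ioc, sub_zero, hp.1, sup_of_le_left, real_smul, zero_le_one,
    one_smul, sub_left_inj]
  ring

lemma integral_Ioc_circleExp_zpow (j : ℤ) :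
    ∫ s in Ioc (0 : ℝ) 1, ((Circle.exp (2 * π * s) ^ j : Circle) : ℂ) = if j = 0 then 1 else 0 := by
  have hexp : ∀ s : ℝ, ((Circle.exp (2 * π * s) ^ j : Circle) : ℂ)
      = Complex.exp ((2 * π * j * Complex.I) * s) := fun s => by
    rw [Circle.coe_zpow, Circle.coe_exp, ← Complex.exp_int_mul]
    push_cast; ring_nf
  simp_rw [hexp, ← intervalIntegral.integral_of_le zero_le_one]
  split_ifs with hj
  · simp [hj]
  have hc : 2 * π * j * Complex.I ≠ 0 := by simp [hj, Real.pi_ne_zero]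
  rw [integral_exp_mul_complex hc, div_eq_zero_iff]
  left
  have : 2 * π * j * Complex.I * (1 : ℝ) = j * (2 * π * Complex.I) := by push_cast; ring
  rw [this, Complex.exp_int_mul_two_pi_mul_I]
  simp

lemma Circle.coe_zpow_neg_mul_re (u : Circle) (a : ℂ) (n : ℤ) (k : ℕ) :
    ((u ^ (-n) : Circle) : ℂ) * (a * (u ^ k : Circle)).re
      = a / 2 * ((u ^ ((k : ℤ) - n) : Circle) : ℂ)
        + conj a / 2 * ((u ^ (-(k : ℤ) - n) : Circle) : ℂ) := by
  rw [Complex.re_eq_add_conj, map_mul, ← Circle.coe_inv_eq_conj, sub_eq_add_neg,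
    sub_eq_add_neg, zpow_add, zpow_add, zpow_neg u (k : ℤ), zpow_natCast]
  push_cast
  ring

noncomputable def signSample (a : ℕ → ℂ) (st : ℝ × ℝ) : Gprod :=
  (Circle.exp (2 * π * st.1), fun k =>
    if st.2 ≤ (1 + (a k * (Circle.exp (2 * π * st.1) ^ k : Circle)).re) / 2 then 1 else -1)

noncomputable def signSampleMeasure (a : ℕ → ℂ) : Measure Gprod :=
  ((volume.restrict (Ioc (0 : ℝ) 1)).prod (volume.restrict (Ioc (0 : ℝ) 1))).map (signSample a)

instance (a : ℕ → ℂ) : IsFiniteMeasure (signSampleMeasure a) :=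
  Measure.isFiniteMeasure_map _ _

lemma measurable_signSample (a : ℕ → ℂ) : Measurable (signSample a) := by
  refine (by fun_prop : Measurable fun st : ℝ × ℝ => Circle.exp (2 * π * st.1)).prodMk
    (measurable_pi_lambda _ fun k => Measurable.ite ?_ measurable_const measurable_const)
  exact measurableSet_le measurable_snd (by fun_prop)

lemma integral_chr_single_inv_signSampleMeasure_eq_setIntegral (a : ℕ → ℂ) {k : ℕ}
    (ha : ‖a k‖ ≤ 1) (n : ℤ) :
    ∫ x, chr (n, Finsupp.single k 1) x⁻¹ ∂signSampleMeasure a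
      = ∫ s in Ioc (0 : ℝ) 1, ((Circle.exp (2 * π * s) ^ (-n) : Circle) : ℂ)
          * (a k * (Circle.exp (2 * π * s) ^ k : Circle)).re := by
  have hchr : Measurable fun x : Gprod => chr (n, Finsupp.single k 1) x⁻¹ := by
    have hzpow : Continuous fun u : Circle => ((u ^ (-n) : Circle) : ℂ) :=
      continuous_subtype_val.comp (continuous_zpow (-n))
    have hsign : Measurable fun g : ℕ → Units ℤ => ((g k : ℤ) : ℂ) :=
      (measurable_from_top (f := fun u : Units ℤ => ((u : ℤ) : ℂ))).comp (measurable_pi_apply k)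
    simp_rw [chr_single_inv]
    exact (hzpow.measurable.comp measurable_fst).mul (hsign.comp measurable_snd)
  have hthreshold : ∀ s : ℝ,
      (1 + (a k * (Circle.exp (2 * π * s) ^ k : Circle)).re) / 2 ∈ Icc (0 : ℝ) 1 := fun s => by
    have : |(a k * (Circle.exp (2 * π * s) ^ k : Circle)).re| ≤ 1 :=
      (Complex.abs_re_le_norm _).trans (by rwa [norm_mul, Circle.norm_coe, mul_one])
    constructor <;> linarith [abs_le.1 this]
  have hcomp : ∀ st : ℝ × ℝ, chr (n, Finsupp.single k 1) (signSample a st)⁻¹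
      = ((Circle.exp (2 * π * st.1) ^ (-n) : Circle) : ℂ)
        * if st.2 ≤ (1 + (a k * (Circle.exp (2 * π * st.1) ^ k : Circle)).re) / 2
          then 1 else -1 := fun st => by
    rw [chr_single_inv]; simp only [signSample]; split_ifs <;> simp
  have hint : Integrable (fun st => chr (n, Finsupp.single k 1) (signSample a st)⁻¹)
      ((volume.restrict (Ioc (0 : ℝ) 1)).prod (volume.restrict (Ioc (0 : ℝ) 1))) := by
    refine Integrable.of_bound (hchr.comp (measurable_signSample a)).aestronglyMeasurable 1
      (ae_of_all _ fun st => ?_)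
    rw [hcomp, norm_mul, Circle.norm_coe, one_mul]
    split_ifs <;> simp
  rw [signSampleMeasure, integral_map (measurable_signSample a).aemeasurable
    hchr.aestronglyMeasurable, integral_prod _ hint]
  refine integral_congr_ae (ae_of_all _ fun s => ?_)
  simp only [hcomp, integral_const_mul, integral_Ioc_ite_le _ (hthreshold s)]
  push_cast
  ring

lemma integral_chr_single_inv_signSampleMeasure (a : ℕ → ℂ) {k : ℕ} (ha : ‖a k‖ ≤ 1) (n : ℤ) :
    ∫ x, chr (n, Finsupp.single k 1) x⁻¹ ∂signSampleMeasure a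
      = a k / 2 * (if n = k then 1 else 0) + conj (a k) / 2 * (if n = -k then 1 else 0) := by
  have hint : ∀ j : ℤ, IntegrableOn (fun s : ℝ => ((Circle.exp (2 * π * s) ^ j : Circle) : ℂ))
      (Ioc 0 1) := fun j => by
    have hzpow : Continuous fun u : Circle => ((u ^ j : Circle) : ℂ) :=
      continuous_subtype_val.comp (continuous_zpow j)
    exact (hzpow.comp (Circle.exp.continuous.comp (continuous_const_mul _))).integrableOn_Ioc
  simp_rw [integral_chr_single_inv_signSampleMeasure_eq_setIntegral a ha n,
    Circle.coe_zpow_neg_mul_re]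
  rw [integral_add ((hint _).const_mul _) ((hint _).const_mul _), integral_const_mul,
    integral_const_mul, integral_Ioc_circleExp_zpow, integral_Ioc_circleExp_zpow]
  simp only [show (k : ℤ) - n = 0 ↔ n = k by omega, show -(k : ℤ) - n = 0 ↔ n = -k by omega]

lemma Measure.toJordanDecomposition_toSignedMeasure {α : Type*} [MeasurableSpace α]
    (ν : Measure α) [IsFiniteMeasure ν] :
    ν.toSignedMeasure.toJordanDecomposition = ⟨ν, 0, .zero_right⟩ :=
  SignedMeasure.toJordanDecomposition_eq <| by
    simp [JordanDecomposition.toSignedMeasure]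

lemma cmIntegral_toComplexMeasure {α : Type*} [MeasurableSpace α] (ν₁ ν₂ : Measure α)
    [IsFiniteMeasure ν₁] [IsFiniteMeasure ν₂] (f : α → ℂ) :
    cmIntegral (SignedMeasure.toComplexMeasure ν₁.toSignedMeasure ν₂.toSignedMeasure) f
      = ∫ x, f x ∂ν₁ + Complex.I * ∫ x, f x ∂ν₂ := by
  rw [cmIntegral, SignedMeasure.re_toComplexMeasure, SignedMeasure.im_toComplexMeasure,
    Measure.toJordanDecomposition_toSignedMeasure, Measure.toJordanDecomposition_toSignedMeasure]
  simp

lemma norm_add_div_le_one {x y : ℂ} {C c : ℝ} (hx : ‖x‖ ≤ C) (hy : ‖y‖ ≤ C) (hc : 2 * C < c) :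
    ‖(x + y) / c‖ ≤ 1 := by
  have hc₀ : 0 < c := by linarith [(norm_nonneg x).trans hx]
  rw [norm_div, div_le_one (by simpa using hc₀.ne'), Complex.norm_of_nonneg hc₀.le]
  linarith [norm_add_le x y]

theorem exists_complexMeasure_cmIntegral_chr_single_inv (P Q : ℕ → ℂ) {C : ℝ}
    (hPQ : ∀ k : ℕ, k ≠ 0 → ‖P k‖ ≤ C ∧ ‖Q k‖ ≤ C) :
    ∃ μ : ComplexMeasure Gprod, ∀ k : ℕ, k ≠ 0 →
      cmIntegral μ (fun x => chr (k, Finsupp.single k 1) x⁻¹) = P k ∧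
      cmIntegral μ (fun x => chr (-k, Finsupp.single k 1) x⁻¹) = Q k := by
  set c : ℝ := 2 * |C| + 1
  have hc : 2 * C < c := by linarith [le_abs_self C]
  have hc₀ : 0 < c := by positivity
  have hc₀' : (c : ℂ) ≠ 0 := by exact_mod_cast hc₀.ne'
  -- `A + i B = 2 P / c` and `conj A + i conj B = 2 Q / c`
  set A : ℕ → ℂ := fun k => (P k + conj (Q k)) / c
  set B : ℕ → ℂ := fun k => (Complex.I * conj (Q k) + -Complex.I * P k) / c
  set μ : ComplexMeasure Gprod :=
    SignedMeasure.toComplexMeasure (c.toNNReal • signSampleMeasure A).toSignedMeasure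
      (c.toNNReal • signSampleMeasure B).toSignedMeasure
  refine ⟨μ, fun k hk => ?_⟩
  obtain ⟨hP, hQ⟩ := hPQ k hk
  have hA : ‖A k‖ ≤ 1 := norm_add_div_le_one hP (by rwa [Complex.norm_conj]) hc
  have hB : ‖B k‖ ≤ 1 := norm_add_div_le_one (by simpa using hQ) (by simpa using hP) hc
  have hcoeff : ∀ n : ℤ, cmIntegral μ (fun x => chr (n, Finsupp.single k 1) x⁻¹)
      = c * ((A k / 2 + Complex.I * (B k / 2)) * (if n = k then 1 else 0)
        + (conj (A k) / 2 + Complex.I * (conj (B k) / 2)) * (if n = -k then 1 else 0)) := by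
    intro n
    rw [cmIntegral_toComplexMeasure, integral_smul_nnreal_measure, integral_smul_nnreal_measure,
      NNReal.smul_def, NNReal.smul_def, Real.coe_toNNReal _ hc₀.le,
      integral_chr_single_inv_signSampleMeasure A hA,
      integral_chr_single_inv_signSampleMeasure B hB]
    simp only [Complex.real_smul]
    ring
  have hk' : (k : ℤ) ≠ -k := by omega
  rw [hcoeff, hcoeff]
  simp only [A, B, if_pos, if_neg hk', if_neg hk'.symm, map_div₀, map_add, map_mul, map_neg,
    Complex.conj_conj, Complex.conj_I, Complex.conj_ofReal]
  constructor
  · field_simp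
    linear_combination (conj (Q k) - P k) * Complex.I_sq
  · field_simp
    linear_combination (conj (P k) - Q k) * Complex.I_sq

/-- `E` is a Sidon set: every bounded function on `E` is interpolated by the
Fourier–Stieltjes transform `γ ↦ ∫ γ(x⁻¹) dμ(x)` of a finite complex Borel
measure `μ` on `G`. -/
theorem stmt13 :
    ∀ φ : (ℤ × (ℕ →₀ ZMod 2)) → ℂ,
      (∃ C : ℝ, ∀ γ ∈ Eset, ‖φ γ‖ ≤ C) →
        ∃ μ : MeasureTheory.ComplexMeasure Gprod,
          ∀ γ ∈ Eset, cmIntegral μ (fun x => chr γ x⁻¹) = φ γ := by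
  rintro φ ⟨C, hC⟩
  obtain ⟨μ, hμ⟩ := exists_complexMeasure_cmIntegral_chr_single_inv
    (fun k => φ (k, Finsupp.single k 1)) (fun k => φ (-k, Finsupp.single k 1)) (C := C)
    fun k hk => ⟨hC _ ⟨k, by omega, Or.inl rfl⟩, hC _ ⟨k, by omega, Or.inr rfl⟩⟩
  refine ⟨μ, ?_⟩
  rintro γ ⟨k, hk, rfl | rfl⟩
  exacts [(hμ k (by omega)).1, (hμ k (by omega)).2]
end

section
/- Let G = 𝕋 × ∏_{k=1}^∞ {−1, +1} with dual group Γ = ℤ ⊕ (⊕_{k=1}^∞ ℤ₂) as above, and let E = {(k, b_k) : k ≥ 1} ∪ {(−k, b_k) : k ≥ 1} ⊆ Γ. Then the Kronecker constant of E equals 2: κ(E) = 2. In particular, for every ε > 0 there is no x ∈ G approximating within 2 − ε the function φ : E → 𝕋 that equals −1 on {(k, b_k)} and +1 on {(−k, b_k)}. -/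
open Complex

/-- The Kronecker constant of a set `E ⊆ ℤ ⊕ (⊕ₖ ℤ₂)`, the dual group of `Gprod`. -/
noncomputable def kappaE (E : Set (ℤ × (ℕ →₀ ZMod 2))) : ℝ :=
  sInf {ε : ℝ | 0 ≤ ε ∧ ∀ φ : (ℤ × (ℕ →₀ ZMod 2)) → ℂ,
    (∀ γ ∈ E, ‖φ γ‖ = 1) →
      ∃ x : Gprod, ∀ γ ∈ E, ‖φ γ - chr γ x‖ < ε}

/-! By recurrence in the compact group `𝕋`, for every `x = (u, g) ∈ G` there are `k ≥ 1` with
`u^k` arbitrarily close to `1`. Then `(k, bₖ)(x) = u^k gₖ` and `(-k, bₖ)(x) = conj (u^k) gₖ` are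
both close to `gₖ = ±1`, so one of them is at distance almost `2` from the value `∓1` that `φ`
prescribes. The bound `κ(E) ≤ 2` holds because all values involved are unimodular. -/

open Filter Topology ComplexConjugate

theorem norm_chr (γ : ℤ × (ℕ →₀ ZMod 2)) (x : Gprod) : ‖chr γ x‖ = 1 := by
  have hsign : ∀ g : ℤˣ, |((g : ℤ) : ℝ)| = 1 := fun g => by
    rcases Int.units_eq_one_or g with rfl | rfl <;> simp
  simp [chr, norm_prod, hsign, Circle.norm_coe]

theorem chr_single (m : ℤ) (k : ℕ) (x : Gprod) :
    chr (m, Finsupp.single k 1) x = (x.1 : ℂ) ^ m * (x.2 k : ℤ) := by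
  simp [chr, ZMod.val_one]

theorem exists_pow_mem_of_mem_nhds_one {G : Type*} [Group G] [TopologicalSpace G] [CompactSpace G]
    [IsTopologicalGroup G] (x : G) {U : Set G} (hU : U ∈ 𝓝 1) : ∃ n ≥ 1, x ^ n ∈ U :=
  ((mapClusterPt_one_atTop_pow x).frequently hU).forall_exists_of_atTop 1

theorem Circle.exists_pow_norm_sub_one_lt (u : Circle) {ε : ℝ} (hε : 0 < ε) :
    ∃ n ≥ 1, ‖(u : ℂ) ^ n - 1‖ < ε := by
  have hU : {z : Circle | ‖(z : ℂ) - 1‖ < ε} ∈ 𝓝 1 :=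
    (isOpen_lt (by fun_prop) continuous_const).mem_nhds (by simpa using hε)
  simpa using exists_pow_mem_of_mem_nhds_one u hU

theorem exists_two_sub_lt_norm_sub_chr (x : Gprod) {ε : ℝ} (hε : 0 < ε) :
    ∃ k : ℕ, 1 ≤ k ∧
      (2 - ε < ‖(-1 : ℂ) - chr ((k : ℤ), Finsupp.single k 1) x‖ ∨
       2 - ε < ‖(1 : ℂ) - chr (-(k : ℤ), Finsupp.single k 1) x‖) := by
  obtain ⟨k, hk, hnear⟩ := x.1.exists_pow_norm_sub_one_lt hε
  set w : ℂ := (x.1 : ℂ) ^ k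
  have hw : 2 - ε < ‖w + 1‖ := by
    have h : (2 : ℝ) ≤ ‖w + 1‖ + ‖w - 1‖ := by
      simpa [one_add_one_eq_two] using norm_sub_le (w + 1) (w - 1)
    linarith
  have hw_inv : w⁻¹ = conj w := Complex.inv_eq_conj (by simp [w, Circle.norm_coe])
  refine ⟨k, hk, ?_⟩
  rw [chr_single, chr_single, zpow_neg, zpow_natCast, hw_inv]
  rcases Int.units_eq_one_or (x.2 k) with h | h
  · left
    simpa [h, w, norm_sub_rev (-1 : ℂ)] using hw
  · right
    rw [← RCLike.norm_conj] at hw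
    simpa [h, w, add_comm] using hw

theorem exists_norm_sub_chr_lt_of_two_lt (E : Set (ℤ × (ℕ →₀ ZMod 2))) {ε : ℝ} (hε : 2 < ε)
    (φ : ℤ × (ℕ →₀ ZMod 2) → ℂ) (hφ : ∀ γ ∈ E, ‖φ γ‖ = 1) :
    ∃ x : Gprod, ∀ γ ∈ E, ‖φ γ - chr γ x‖ < ε :=
  ⟨1, fun γ hγ => (norm_sub_le _ _).trans_lt (by rw [hφ γ hγ, norm_chr]; linarith)⟩

theorem kappaE_le_two (E : Set (ℤ × (ℕ →₀ ZMod 2))) : kappaE E ≤ 2 :=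
  le_of_forall_pos_le_add fun δ hδ => csInf_le ⟨0, fun _ h => h.1⟩
    ⟨by linarith, fun φ hφ => exists_norm_sub_chr_lt_of_two_lt E (by linarith) φ hφ⟩

theorem le_kappaE {E : Set (ℤ × (ℕ →₀ ZMod 2))} {c : ℝ} (φ : ℤ × (ℕ →₀ ZMod 2) → ℂ)
    (hφ : ∀ γ ∈ E, ‖φ γ‖ = 1) (hfar : ∀ ε < c, ∀ x : Gprod, ∃ γ ∈ E, ε ≤ ‖φ γ - chr γ x‖) :
    c ≤ kappaE E := by
  refine le_csInf ⟨3, by norm_num, fun ψ hψ => exists_norm_sub_chr_lt_of_two_lt E (by norm_num) ψ hψ⟩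
    ?_
  rintro ε ⟨-, hε⟩
  by_contra! hlt
  obtain ⟨x, hx⟩ := hε φ hφ
  obtain ⟨γ, hγ, hγfar⟩ := hfar ε hlt x
  exact (hx γ hγ).not_ge hγfar

/-- `κ(E) = 2`; in particular no point of `G` approximates within `2 − ε` the
function which is `−1` on `{(k, bₖ)}` and `+1` on `{(−k, bₖ)}`. -/
theorem stmt14 :
    kappaE Eset = 2 ∧
    ∀ ε : ℝ, 0 < ε →
      ¬ ∃ x : Gprod, ∀ k : ℕ, 1 ≤ k →
        ‖(-1 : ℂ) - chr (((k : ℤ), Finsupp.single k (1 : ZMod 2))) x‖ < 2 - ε ∧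
        ‖(1 : ℂ) - chr ((-(k : ℤ), Finsupp.single k (1 : ZMod 2))) x‖ < 2 - ε := by
  refine ⟨le_antisymm (kappaE_le_two Eset) ?_, ?_⟩
  · refine le_kappaE (fun γ => if 0 < γ.1 then -1 else 1) (fun γ _ => by split_ifs <;> simp)
      fun ε hε x => ?_
    obtain ⟨k, hk, hfar⟩ := exists_two_sub_lt_norm_sub_chr x (sub_pos.2 hε)
    rw [sub_sub_cancel] at hfar
    rcases hfar with hfar | hfar
    · exact ⟨_, ⟨k, hk, Or.inl rfl⟩, by simpa [show 0 < k from hk] using hfar.le⟩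
    · exact ⟨_, ⟨k, hk, Or.inr rfl⟩, by simpa [(Int.natCast_nonneg k).not_gt] using hfar.le⟩
  · rintro ε hε ⟨x, hx⟩
    obtain ⟨k, hk, hfar⟩ := exists_two_sub_lt_norm_sub_chr x hε
    exact hfar.elim (lt_asymm (hx k hk).1) (lt_asymm (hx k hk).2)
end

section
/- Let n ≥ 2 be an integer and let c be a real number with c < |1 − e^{iπ(1−1/n)}|. For any finite set F and any function z : F → 𝕋, the set V = {ψ : F → 𝐓ₙ such that |z(γ) − ψ(γ)| ≤ c for all γ ∈ F} has cardinality at most (n−1)^{|F|}. (Consequently, any covering of the set of all functions F → 𝐓ₙ by such sets requires at least (n/(n−1))^{|F|} of them.) -/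
open Complex
open scoped Real

/-!
Every point `w` of the unit circle has an `n`-th root of unity at angular distance at least
`π - π/n` from it: rounding the angle of `-w` to the lattice `(2π/n)ℤ` misses it by at most `π/n`.
So for `c` below the chord `|1 - e^{iπ(1-1/n)}|` at most `n - 1` roots lie within `c` of `w`, and
the product over `F` gives `(n-1)^|F|`. Counting the `n^|F|` functions `F → 𝐓ₙ` then bounds the
size of any covering.
-/

open Finset Polynomial

lemma exists_int_abs_sub_mul_le (y : ℝ) {p : ℝ} (hp : 0 < p) : ∃ k : ℤ, |y - k * p| ≤ p / 2 := by
  refine ⟨round (y / p), ?_⟩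
  have h : y - round (y / p) * p = p * (y / p - round (y / p)) := by field_simp
  rw [h, abs_mul, abs_of_pos hp]
  nlinarith [abs_sub_round (y / p)]

lemma norm_exp_mul_I_sub_exp_mul_I_sq (a b : ℝ) :
    ‖exp (a * I) - exp (b * I)‖ ^ 2 = 2 - 2 * Real.cos (a - b) := by
  rw [← normSq_eq_norm_sq, normSq_apply, Real.cos_sub]
  simp only [sub_re, sub_im, exp_ofReal_mul_I_re, exp_ofReal_mul_I_im]
  nlinarith [Real.sin_sq_add_cos_sq a, Real.sin_sq_add_cos_sq b]

lemma exists_pow_eq_one_norm_sub_ge {n : ℕ} (hn : 0 < n) {w : ℂ} (hw : ‖w‖ = 1) :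
    ∃ ψ : ℂ, ψ ^ n = 1 ∧ ‖1 - exp (π * (1 - 1 / (n : ℂ)) * I)‖ ≤ ‖w - ψ‖ := by
  have hn' : (0 : ℝ) < n := Nat.cast_pos.mpr hn
  obtain ⟨k, hk⟩ := exists_int_abs_sub_mul_le (arg w - π) (by positivity : 0 < 2 * π / n)
  set φ : ℝ := k * (2 * π / n)
  refine ⟨exp (φ * I), ?_, ?_⟩
  · rw [← exp_nat_mul, ← exp_int_mul_two_pi_mul_I k]
    congr 1
    have : (n : ℂ) ≠ 0 := by exact_mod_cast hn.ne'
    simp only [φ]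
    push_cast
    field_simp
  have hw' : w = exp (arg w * I) := by
    simpa [hw] using (norm_mul_exp_arg_mul_I w).symm
  have hconst : (π : ℂ) * (1 - 1 / (n : ℂ)) * I = ((π - π / n : ℝ) : ℂ) * I := by
    push_cast
    ring
  have hcos : Real.cos (arg w - φ) ≤ Real.cos (π - π / n) := by
    have hx : |arg w - φ - π| ≤ π / n := by
      rw [sub_right_comm]
      exact hk.trans_eq (by ring)
    have hπn : π / n ≤ π := div_le_self Real.pi_pos.le (by exact_mod_cast hn)
    calc Real.cos (arg w - φ) = -Real.cos |arg w - φ - π| := by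
          rw [Real.cos_abs, Real.cos_sub_pi]; ring_nf
      _ ≤ -Real.cos (π / n) := by
          gcongr
          exact Real.cos_le_cos_of_nonneg_of_le_pi (abs_nonneg _) hπn hx
      _ = Real.cos (π - π / n) := by rw [Real.cos_pi_sub]
  have hone : (1 : ℂ) = exp ((0 : ℝ) * I) := by simp
  rw [← sq_le_sq₀ (norm_nonneg _) (norm_nonneg _), hconst, hone, hw',
    norm_exp_mul_I_sub_exp_mul_I_sq, norm_exp_mul_I_sub_exp_mul_I_sq, zero_sub, Real.cos_neg]
  linarith

lemma card_filter_nthRootsFinset_norm_sub_le {n : ℕ} (hn : 0 < n) {c : ℝ}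
    (hc : c < ‖1 - exp (π * (1 - 1 / (n : ℂ)) * I)‖) {w : ℂ} (hw : ‖w‖ = 1) :
    #{ψ ∈ nthRootsFinset n (1 : ℂ) | ‖w - ψ‖ ≤ c} ≤ n - 1 := by
  obtain ⟨ψ, hψ, hfar⟩ := exists_pow_eq_one_norm_sub_ge hn hw
  have hssub : {ψ ∈ nthRootsFinset n (1 : ℂ) | ‖w - ψ‖ ≤ c} ⊂ nthRootsFinset n 1 :=
    filter_ssubset.mpr ⟨ψ, (mem_nthRootsFinset hn 1).mpr hψ, (hc.trans_le hfar).not_ge⟩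
  have hcard := card_lt_card hssub
  rw [(isPrimitiveRoot_exp n hn.ne').card_nthRootsFinset] at hcard
  omega

section NearRoots

variable {F : Type*} [Fintype F] [DecidableEq F]

noncomputable def nearRootsOfUnity (n : ℕ) (c : ℝ) (z : F → ℂ) : Finset (F → ℂ) :=
  Fintype.piFinset fun γ ↦ {ψ ∈ nthRootsFinset n (1 : ℂ) | ‖z γ - ψ‖ ≤ c}

lemma mem_nearRootsOfUnity {n : ℕ} (hn : 0 < n) {c : ℝ} {z ψ : F → ℂ} :
    ψ ∈ nearRootsOfUnity n c z ↔ (∀ γ, ψ γ ^ n = 1) ∧ ∀ γ, ‖z γ - ψ γ‖ ≤ c := by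
  simp only [nearRootsOfUnity, Fintype.mem_piFinset, mem_filter, mem_nthRootsFinset hn,
    forall_and]

lemma card_nearRootsOfUnity_le {n : ℕ} (hn : 0 < n) {c : ℝ}
    (hc : c < ‖1 - exp (π * (1 - 1 / (n : ℂ)) * I)‖) {z : F → ℂ} (hz : ∀ γ, ‖z γ‖ = 1) :
    #(nearRootsOfUnity n c z) ≤ (n - 1) ^ Fintype.card F := by
  rw [nearRootsOfUnity, Fintype.card_piFinset]
  exact prod_le_pow_card _ _ _ fun γ _ ↦ card_filter_nthRootsFinset_norm_sub_le hn hc (hz γ)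

lemma pow_card_le_mul_of_covers {n : ℕ} (hn : 0 < n) {c : ℝ}
    (hc : c < ‖1 - exp (π * (1 - 1 / (n : ℂ)) * I)‖) {N : ℕ} {zs : Fin N → F → ℂ}
    (hzs : ∀ j γ, ‖zs j γ‖ = 1)
    (hcover : ∀ ψ : F → ℂ, (∀ γ, ψ γ ^ n = 1) → ∃ j, ∀ γ, ‖zs j γ - ψ γ‖ ≤ c) :
    n ^ Fintype.card F ≤ N * (n - 1) ^ Fintype.card F := by
  have hsub : Fintype.piFinset (fun _ : F ↦ nthRootsFinset n (1 : ℂ)) ⊆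
      univ.biUnion fun j ↦ nearRootsOfUnity n c (zs j) := by
    intro ψ hψ
    have hroots : ∀ γ, ψ γ ^ n = 1 := fun γ ↦
      (mem_nthRootsFinset hn 1).mp (Fintype.mem_piFinset.mp hψ γ)
    obtain ⟨j, hj⟩ := hcover ψ hroots
    exact mem_biUnion.mpr ⟨j, mem_univ j, (mem_nearRootsOfUnity hn).mpr ⟨hroots, hj⟩⟩
  calc n ^ Fintype.card F
      = #(Fintype.piFinset fun _ : F ↦ nthRootsFinset n (1 : ℂ)) := by
        rw [Fintype.card_piFinset, prod_const, card_univ,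
          (isPrimitiveRoot_exp n hn.ne').card_nthRootsFinset]
    _ ≤ #(univ.biUnion fun j ↦ nearRootsOfUnity n c (zs j)) := card_le_card hsub
    _ ≤ #(univ : Finset (Fin N)) * (n - 1) ^ Fintype.card F :=
        card_biUnion_le_card_mul _ _ _ fun j _ ↦ card_nearRootsOfUnity_le hn hc (hzs j)
    _ = N * (n - 1) ^ Fintype.card F := by rw [card_univ, Fintype.card_fin]

end NearRoots

/-- If `c < |1 − e^{iπ(1−1/n)}|`, then for any `z : F → 𝕋` the set of functions
`ψ : F → 𝐓ₙ` with `|z(γ) − ψ(γ)| ≤ c` for all `γ` has at most `(n−1)^|F|` elements;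
consequently, covering all of `𝐓ₙ^F` by such sets requires at least `(n/(n−1))^|F|`
of them. -/
theorem stmt16 (n : ℕ) (hn : 2 ≤ n) (c : ℝ)
    (hc : c < ‖1 - Complex.exp (π * (1 - 1 / (n : ℂ)) * Complex.I)‖)
    {F : Type*} [Fintype F] (z : F → ℂ) (hz : ∀ γ : F, ‖z γ‖ = 1) :
    Nat.card {ψ : F → ℂ // (∀ γ : F, ψ γ ^ n = 1) ∧ ∀ γ : F, ‖z γ - ψ γ‖ ≤ c}
        ≤ (n - 1) ^ (Fintype.card F) ∧
    ∀ (N : ℕ) (zs : Fin N → F → ℂ), (∀ j γ, ‖zs j γ‖ = 1) →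
      (∀ ψ : F → ℂ, (∀ γ : F, ψ γ ^ n = 1) →
        ∃ j, ∀ γ : F, ‖zs j γ - ψ γ‖ ≤ c) →
      ((n : ℝ) / (n - 1)) ^ (Fintype.card F) ≤ N := by
  classical
  have hn0 : 0 < n := by omega
  refine ⟨?_, fun N zs hzs hcover ↦ ?_⟩
  · rw [← Nat.card_congr (Equiv.subtypeEquivRight fun ψ ↦ mem_nearRootsOfUnity hn0),
      Nat.card_eq_finsetCard]
    exact card_nearRootsOfUnity_le hn0 hc hz
  · have hcount := pow_card_le_mul_of_covers hn0 hc hzs hcover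
    have hn1 : (0 : ℝ) < n - 1 := by
      have : (2 : ℝ) ≤ n := by exact_mod_cast hn
      linarith
    rw [div_pow, div_le_iff₀ (by positivity)]
    have hcount_real := (Nat.cast_le (α := ℝ)).mpr hcount
    push_cast [Nat.cast_sub (by omega : 1 ≤ n)] at hcount_real
    exact hcount_real
end

section
/- Let G be a compact abelian group with dual group Γ and let E ⊆ Γ. If E is ε-Kronecker for some ε < 1, then E is an I₀ set: every bounded function φ : E → ℂ is the restriction to E of the Fourier–Stieltjes transform of a discrete measure on G. -/
/-!
Greedy interpolation. Write a function `ψ` bounded by `D` on `E` as `ψ = |ψ| u` with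
`u : E → 𝕋`. The Kronecker property gives `x` with `|u(γ) - γ(-x)| < ε` on `E`, so
subtracting the atom `(D/2) δₓ` leaves a residual bounded by `D/2 + εD/2 = ρD` with
`ρ = (1 + ε)/2 < 1`. Iterating, the masses `Cρⁿ/2` are summable and the residuals tend
to `0`, so the series of atoms interpolates `φ`.
-/

open Complex Filter Topology

lemma Circle.norm_coe_inv_sub_coe_inv (a b : Circle) :
    ‖((a⁻¹ : Circle) : ℂ) - ((b⁻¹ : Circle) : ℂ)‖ = ‖(a : ℂ) - b‖ := by
  rw [Circle.coe_inv_eq_conj, Circle.coe_inv_eq_conj, ← map_sub, Complex.norm_conj]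

lemma hasSum_of_sub_succ_eq_of_tendsto_zero {V : Type*} [SeminormedAddCommGroup V]
    {a F : ℕ → V} (hstep : ∀ n, F n - F (n + 1) = a n) (hF : Tendsto F atTop (𝓝 0))
    (ha : Summable fun n => ‖a n‖) : HasSum a (F 0) := by
  rw [hasSum_iff_tendsto_nat_of_summable_norm ha]
  have hpartial : ∀ n, ∑ k ∈ Finset.range n, a k = F 0 - F n := fun n => by
    simp only [← hstep, Finset.sum_range_sub']
  simpa only [hpartial, sub_zero] using (tendsto_const_nhds (x := F 0)).sub hF

section GreedyInterpolation

variable {ι X : Type*} {E : Set ι} {e : X → ι → Circle} {ε : ℝ}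

lemma exists_norm_sub_half_mul_le
    (happrox : ∀ u : ι → Circle, ∃ x, ∀ i ∈ E, ‖(u i : ℂ) - e x i‖ < ε) (ψ : ι → ℂ) :
    ∃ x, ∀ D : ℝ, 0 ≤ D → (∀ i ∈ E, ‖ψ i‖ ≤ D) →
      ∀ i ∈ E, ‖ψ i - (D / 2 : ℝ) * e x i‖ ≤ (1 + ε) / 2 * D := by
  obtain ⟨x, hx⟩ := happrox fun i => Circle.exp (arg (ψ i))
  refine ⟨x, fun D hD hψ i hi => ?_⟩
  set u : ℂ := (Circle.exp (arg (ψ i)) : ℂ)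
  have hpolar : ψ i = ‖ψ i‖ * u := (norm_mul_exp_arg_mul_I (ψ i)).symm
  have hmod : |‖ψ i‖ - D / 2| ≤ D / 2 :=
    abs_le.2 ⟨by linarith [norm_nonneg (ψ i)], by linarith [hψ i hi]⟩
  calc ‖ψ i - (D / 2 : ℝ) * e x i‖
      = ‖((‖ψ i‖ - D / 2 : ℝ) : ℂ) * u + ((D / 2 : ℝ) : ℂ) * (u - e x i)‖ := by
        congr 1; push_cast; linear_combination hpolar
    _ ≤ |‖ψ i‖ - D / 2| + D / 2 * ‖u - e x i‖ := by
        refine (norm_add_le _ _).trans_eq ?_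
        rw [norm_mul, norm_mul, norm_real, norm_real, Real.norm_eq_abs, Real.norm_eq_abs,
          Circle.norm_coe, mul_one, abs_of_nonneg (by linarith : 0 ≤ D / 2)]
    _ ≤ D / 2 + D / 2 * ε := by gcongr; exact (hx i hi).le
    _ = (1 + ε) / 2 * D := by ring

noncomputable def greedyResidual (e : X → ι → Circle) (x : (ι → ℂ) → X) (c : ℕ → ℝ)
    (φ : ι → ℂ) : ℕ → ι → ℂ
  | 0 => φ
  | n + 1 => fun i => greedyResidual e x c φ n i - c n * e (x (greedyResidual e x c φ n)) i

lemma norm_greedyResidual_le {x : (ι → ℂ) → X} {ρ C : ℝ} (hρ : 0 ≤ ρ) (hC : 0 ≤ C)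
    (hx : ∀ ψ, ∀ D : ℝ, 0 ≤ D → (∀ i ∈ E, ‖ψ i‖ ≤ D) →
      ∀ i ∈ E, ‖ψ i - (D / 2 : ℝ) * e (x ψ) i‖ ≤ ρ * D)
    {φ : ι → ℂ} (hφ : ∀ i ∈ E, ‖φ i‖ ≤ C) (n : ℕ) :
    ∀ i ∈ E, ‖greedyResidual e x (fun n => C * ρ ^ n / 2) φ n i‖ ≤ C * ρ ^ n := by
  induction n with
  | zero => simpa [greedyResidual] using hφ
  | succ n ih =>
    intro i hi
    calc _ ≤ ρ * (C * ρ ^ n) := hx _ _ (by positivity) ih i hi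
      _ = C * ρ ^ (n + 1) := by ring

theorem exists_summable_hasSum_of_forall_approx (hε : ε < 1)
    (happrox : ∀ u : ι → Circle, ∃ x, ∀ i ∈ E, ‖(u i : ℂ) - e x i‖ < ε)
    (φ : ι → ℂ) {C : ℝ} (hC : ∀ i ∈ E, ‖φ i‖ ≤ C) :
    ∃ (c : ℕ → ℂ) (x : ℕ → X), Summable (fun n => ‖c n‖) ∧
      ∀ i ∈ E, HasSum (fun n => c n * e (x n) i) (φ i) := by
  obtain ⟨ε, hε0, hε1, happrox⟩ : ∃ ε' : ℝ, 0 ≤ ε' ∧ ε' < 1 ∧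
      ∀ u : ι → Circle, ∃ x, ∀ i ∈ E, ‖(u i : ℂ) - e x i‖ < ε' :=
    ⟨max ε 0, le_max_right _ _, max_lt hε one_pos,
      fun u => (happrox u).imp fun x hx i hi => (hx i hi).trans_le (le_max_left _ _)⟩
  set ρ := (1 + ε) / 2 with hρ
  have hρ0 : 0 ≤ ρ := by positivity
  have hρ1 : ρ < 1 := by linarith
  set C' := max C 0
  have hC' : ∀ i ∈ E, ‖φ i‖ ≤ C' := fun i hi => (hC i hi).trans (le_max_left _ _)
  choose x hx using exists_norm_sub_half_mul_le happrox
  set F := greedyResidual e x (fun n => C' * ρ ^ n / 2) φ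
  have hF := norm_greedyResidual_le hρ0 (le_max_right C 0) hx hC'
  have hc : Summable fun n => ‖((C' * ρ ^ n / 2 : ℝ) : ℂ)‖ := by
    refine ((summable_geometric_of_lt_one hρ0 hρ1).mul_left (C' / 2)).congr fun n => ?_
    rw [norm_real, Real.norm_of_nonneg (by positivity)]
    ring
  refine ⟨fun n => (C' * ρ ^ n / 2 : ℝ), fun n => x (F n), hc, fun i hi => ?_⟩
  refine hasSum_of_sub_succ_eq_of_tendsto_zero (F := fun n => F n i) (fun n => sub_sub_cancel _ _)
    ?_ (hc.congr fun n => by rw [norm_mul, Circle.norm_coe, mul_one])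
  refine squeeze_zero_norm (fun n => hF n i hi) ?_
  simpa using (tendsto_pow_atTop_nhds_zero_of_lt_one hρ0 hρ1).const_mul C'

end GreedyInterpolation

theorem stmt18_general {G : Type*} [CommGroup G] [TopologicalSpace G]
    (E : Set (ContinuousMonoidHom G Circle)) (ε : ℝ) (hε : ε < 1)
    (hK : ∀ φ : ContinuousMonoidHom G Circle → Circle,
      ∃ x : G, ∀ γ ∈ E, ‖(φ γ : ℂ) - (γ x : ℂ)‖ < ε) :
    ∀ φ : ContinuousMonoidHom G Circle → ℂ,
      (∃ C : ℝ, ∀ γ ∈ E, ‖φ γ‖ ≤ C) →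
        ∃ (c : ℕ → ℂ) (x : ℕ → G), Summable (fun i => ‖c i‖) ∧
          ∀ γ ∈ E, ∑' i : ℕ, c i * ((γ (x i)⁻¹ : Circle) : ℂ) = φ γ := by
  rintro φ ⟨C, hC⟩
  have happrox : ∀ u : ContinuousMonoidHom G Circle → Circle,
      ∃ x : G, ∀ γ ∈ E, ‖(u γ : ℂ) - (γ x⁻¹ : Circle)‖ < ε := fun u =>
    (hK fun γ => (u γ)⁻¹).imp fun x hx γ hγ => by
      rw [map_inv, ← inv_inv (u γ), Circle.norm_coe_inv_sub_coe_inv]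
      exact hx γ hγ
  obtain ⟨c, x, hc, hsum⟩ :=
    exists_summable_hasSum_of_forall_approx (e := fun x γ => γ x⁻¹) hε happrox φ hC
  exact ⟨c, x, hc, fun γ hγ => (hsum γ hγ).tsum_eq⟩

/-- If `E` is `ε`-Kronecker for some `ε < 1`, then `E` is an `I₀` set: every bounded
function `φ : E → ℂ` is interpolated by the Fourier–Stieltjes transform
`γ ↦ ∑ᵢ cᵢ γ(xᵢ⁻¹)` of a discrete measure `∑ᵢ cᵢ δ_{xᵢ}` on `G` with `∑ᵢ |cᵢ| < ∞`. -/
theorem stmt18 {G : Type*} [CommGroup G] [TopologicalSpace G] [IsTopologicalGroup G]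
    [CompactSpace G] (E : Set (ContinuousMonoidHom G Circle)) (ε : ℝ) (hε : ε < 1)
    (hK : ∀ φ : ContinuousMonoidHom G Circle → Circle,
      ∃ x : G, ∀ γ ∈ E, ‖(φ γ : ℂ) - (γ x : ℂ)‖ < ε) :
    ∀ φ : ContinuousMonoidHom G Circle → ℂ,
      (∃ C : ℝ, ∀ γ ∈ E, ‖φ γ‖ ≤ C) →
        ∃ (c : ℕ → ℂ) (x : ℕ → G), Summable (fun i => ‖c i‖) ∧
          ∀ γ ∈ E, ∑' i : ℕ, c i * ((γ (x i)⁻¹ : Circle) : ℂ) = φ γ :=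
  stmt18_general E ε hε hK
end
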